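/- For every DFA game 𝒢 = (𝒜,F) and every state q of 𝒜, we have q ∈ Win(𝒜,F) if and only if the agent has a winning strategy in the game 𝒢_q = (𝒜_q, F), where 𝒜_q is the same automaton with initial state q. -/

import Mathlib

open Classical

/-- Syntax of LTLf formulas over atoms `AP`. -/
inductive LTLf (AP : Type) : Type where
  | atom  : AP → LTLf AP
  | conj  : LTLf AP → LTLf AP → LTLf AP
  | neg   : LTLf AP → LTLf AP
  | next  : LTLf AP → LTLf AP
  | untl  : LTLf AP → LTLf AP → LTLf AP

/-- Satisfaction of an LTLf formula at instant `i` of a finite trace `π`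
    (a list of letters, each letter a set of atoms). -/
def LTLf.SatAt {AP : Type} (π : List (Set AP)) : LTLf AP → ℕ → Prop
  | .atom p, i => i < π.length ∧ p ∈ π.getD i ∅
  | .conj f g, i => f.SatAt π i ∧ g.SatAt π i
  | .neg f, i => ¬ f.SatAt π i
  | .next f, i => i + 1 < π.length ∧ f.SatAt π (i + 1)
  | .untl f g, i => ∃ j, i ≤ j ∧ j < π.length ∧ g.SatAt π j ∧
      ∀ k, i ≤ k → k < j → f.SatAt π k

/-- A finite nonempty trace satisfies an LTLf formula if it holds at instant 0. -/
def LTLf.FinSat {AP : Type} (π : List (Set AP)) (f : LTLf AP) : Prop :=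
  π ≠ [] ∧ f.SatAt π 0

/-- A letter of the alphabet `2^(𝒳 ∪ 𝒴)`: a subset of `X ⊕ Y`. -/
abbrev GameLetter (X Y : Type) := Set (X ⊕ Y)

/-- The letter `X ∪ Y` determined by an input valuation and an output valuation. -/
def mkLetter {X Y : Type} (Xs : Set X) (Ys : Set Y) : GameLetter X Y :=
  {a | Sum.elim (fun x => x ∈ Xs) (fun y => y ∈ Ys) a}

/-- An agent strategy `σ : (2^𝒳)* → 2^𝒴`. -/
abbrev Strategy (X Y : Type) := List (Set X) → Set Y

/-- The prefix of length `k` of an infinite word. -/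
def prefixList {A : Type} (π : ℕ → A) (k : ℕ) : List A :=
  (List.range k).map π

/-- The infinite trace `π(𝐗,σ)` induced by a strategy `σ` and inputs `𝐗`:
    its `n`-th letter is `X_n ∪ σ(X_0 ⋯ X_{n-1})`. -/
def play {X Y : Type} (σ : Strategy X Y) (Xs : ℕ → Set X) : ℕ → GameLetter X Y :=
  fun n => mkLetter (Xs n) (σ (prefixList Xs n))

/-- An infinite trace satisfies an LTLf formula iff some finite nonempty prefix does. -/
def InfSat {X Y : Type} (π : ℕ → GameLetter X Y) (f : LTLf (X ⊕ Y)) : Prop :=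
  ∃ k : ℕ, LTLf.FinSat (prefixList π (k + 1)) f

/-- A strategy is winning for an LTLf formula: every induced trace satisfies it. -/
def Wins {X Y : Type} (σ : Strategy X Y) (f : LTLf (X ⊕ Y)) : Prop :=
  ∀ Xs : ℕ → Set X, InfSat (play σ Xs) f

/-- A finite set of LTLf formulas is realisable if some strategy is winning for the
    conjunction of all formulas in the set. -/
def Realisable {X Y : Type} (Ψ : Finset (LTLf (X ⊕ Y))) : Prop :=
  ∃ σ : Strategy X Y, ∀ Xs : ℕ → Set X, ∃ k : ℕ,
    ∀ f ∈ Ψ, LTLf.FinSat (prefixList (play σ Xs) (k + 1)) f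

/-- Observed value of an infinite trace: sum of the values of satisfied formulas. -/
noncomputable def traceValue {X Y : Type} (Φ : Finset (LTLf (X ⊕ Y)))
    (V : LTLf (X ⊕ Y) → ℝ) (π : ℕ → GameLetter X Y) : ℝ :=
  ∑ f ∈ Φ, if InfSat π f then V f else 0

/-- Observed value of a strategy: minimum over inputs of the observed trace value. -/
noncomputable def stratValue {X Y : Type} (Φ : Finset (LTLf (X ⊕ Y)))
    (V : LTLf (X ⊕ Y) → ℝ) (σ : Strategy X Y) : ℝ :=
  sInf {v | ∃ Xs : ℕ → Set X, v = traceValue Φ V (play σ Xs)}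

/-- Guarantee value of a strategy: sum of values of the formulas it wins. -/
noncomputable def guaranteeValue {X Y : Type} (Φ : Finset (LTLf (X ⊕ Y)))
    (G : LTLf (X ⊕ Y) → ℝ) (σ : Strategy X Y) : ℝ :=
  ∑ f ∈ Φ, if Wins σ f then G f else 0

/-- `preSet σ`: the set of finite prefixes of the plays induced by `σ`. -/
def preSet {X Y : Type} (σ : Strategy X Y) : Set (List (GameLetter X Y)) :=
  {h | ∃ Xs : ℕ → Set X, prefixList (play σ Xs) h.length = h}

/-- `V_h(σ)`: minimum observed value over the plays of `σ` extending the history `h`. -/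
noncomputable def histValue {X Y : Type} (Φ : Finset (LTLf (X ⊕ Y)))
    (V : LTLf (X ⊕ Y) → ℝ) (σ : Strategy X Y) (h : List (GameLetter X Y)) : ℝ :=
  sInf {v | ∃ Xs : ℕ → Set X,
    prefixList (play σ Xs) h.length = h ∧ v = traceValue Φ V (play σ Xs)}

/-- Controllable preimage: states from which the agent can force `S` in one step. -/
def PreC {X Y Q : Type} (M : DFA (GameLetter X Y) Q) (S : Set Q) : Set Q :=
  {q | ∃ Ys : Set Y, ∀ Xs : Set X, M.step q (mkLetter Xs Ys) ∈ S}

/-- The iterates `Win_i` of the reachability fixed point computation. -/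
def WinIter {X Y Q : Type} (M : DFA (GameLetter X Y) Q) (F : Set Q) : ℕ → Set Q
  | 0 => F
  | i + 1 => WinIter M F i ∪ PreC M (WinIter M F i)

/-- The winning region: the limit of the nondecreasing sequence `Win_i`. -/
def WinRegion {X Y Q : Type} (M : DFA (GameLetter X Y) Q) (F : Set Q) : Set Q :=
  ⋃ i : ℕ, WinIter M F i

/-- The run of a DFA from state `q` on an infinite word. -/
def runFrom {A Q : Type} (M : DFA A Q) (q : Q) (π : ℕ → A) : ℕ → Q
  | 0 => q
  | n + 1 => M.step (runFrom M q π n) (π n)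

/-- A strategy is winning in the DFA game `(𝒜_q, F)`: every induced play,
    starting from `q`, visits a state of `F`. -/
def WinsGameFrom {X Y Q : Type} (M : DFA (GameLetter X Y) Q) (q : Q) (F : Set Q)
    (σ : Strategy X Y) : Prop :=
  ∀ Xs : ℕ → Set X, ∃ n : ℕ, runFrom M q (play σ Xs) n ∈ F

/-- The product automaton of a family of DFAs (accepting states irrelevant). -/
def prodDFA {X Y ι : Type} {Qs : ι → Type}
    (A : ∀ i, DFA (GameLetter X Y) (Qs i)) : DFA (GameLetter X Y) (∀ i, Qs i) where
  step := fun q a i => (A i).step (q i) a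
  start := fun i => (A i).start
  accept := ∅

/-- `F_Ψ`: product states whose `i`-th component is accepting for every `i ∈ Ψ`. -/
def FPsi {X Y ι : Type} {Qs : ι → Type} (A : ∀ i, DFA (GameLetter X Y) (Qs i))
    (Ψ : Finset ι) : Set (∀ i, Qs i) :=
  {q | ∀ i ∈ Ψ, q i ∈ (A i).accept}

/-- `F_v`: union of the `F_Ψ` over subsets `Ψ` of total value at least `v`. -/
def Fge {X Y ι : Type} {Qs : ι → Type}
    (A : ∀ i, DFA (GameLetter X Y) (Qs i)) (V : ι → ℝ) (v : ℝ) : Set (∀ i, Qs i) :=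
  ⋃ Ψ ∈ {Ψ : Finset ι | v ≤ ∑ i ∈ Ψ, V i}, FPsi A Ψ

/-- `F^=_v`: union of the `F_Ψ` over subsets `Ψ` of total value exactly `v`. -/
def Feq {X Y ι : Type} {Qs : ι → Type}
    (A : ∀ i, DFA (GameLetter X Y) (Qs i)) (V : ι → ℝ) (v : ℝ) : Set (∀ i, Qs i) :=
  ⋃ Ψ ∈ {Ψ : Finset ι | ∑ i ∈ Ψ, V i = v}, FPsi A Ψ

/-- Observed value of an infinite trace for an indexed family of formulas. -/
noncomputable def traceValueI {X Y ι : Type} [Fintype ι] (φ : ι → LTLf (X ⊕ Y))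
    (V : ι → ℝ) (π : ℕ → GameLetter X Y) : ℝ :=
  ∑ i : ι, if InfSat π (φ i) then V i else 0

/-- Observed value of a strategy for an indexed family of formulas. -/
noncomputable def stratValueI {X Y ι : Type} [Fintype ι] (φ : ι → LTLf (X ⊕ Y))
    (V : ι → ℝ) (σ : Strategy X Y) : ℝ :=
  sInf {v | ∃ Xs : ℕ → Set X, v = traceValueI φ V (play σ Xs)}

/-!
If `q ∈ Win_i`, induct on `i`: in `F` every strategy wins at once, and from a state of
`PreC(Win_i)` the agent plays the witnessing output and then continues with a winning
strategy from whichever state of `Win_i` the environment's input leads to.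

Conversely, since `2^𝒳` is finite, the successors of a move enter `Win` at a bounded stage,
so `Win` is closed under `PreC`. Hence from any state outside `Win` the environment can
answer every output with an input that stays outside `Win`; answering `σ` in this way
yields a play that never meets `F ⊆ Win`.
-/

lemma runFrom_succ {A Q : Type} (M : DFA A Q) (q : Q) (π : ℕ → A) (n : ℕ) :
    runFrom M q π (n + 1) = runFrom M (M.step q (π 0)) (fun k => π (k + 1)) n := by
  induction n with
  | zero => rfl
  | succ n ih => exact congrArg (M.step · (π (n + 1))) ih

lemma prefixList_succ {A : Type} (π : ℕ → A) (k : ℕ) :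
    prefixList π (k + 1) = prefixList π k ++ [π k] := by
  simp [prefixList, List.range_succ]

lemma prefixList_succ' {A : Type} (π : ℕ → A) (k : ℕ) :
    prefixList π (k + 1) = π 0 :: prefixList (fun n => π (n + 1)) k := by
  simp [prefixList, List.range_succ_eq_map, Function.comp_def]

namespace Strategy

variable {X Y : Type}

def cons (Ys : Set Y) (τ : Set X → Strategy X Y) : Strategy X Y
  | [] => Ys
  | X₀ :: h => τ X₀ h

lemma play_cons_zero (Ys : Set Y) (τ : Set X → Strategy X Y) (Xs : ℕ → Set X) :
    play (cons Ys τ) Xs 0 = mkLetter (Xs 0) Ys :=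
  rfl

lemma play_cons_succ (Ys : Set Y) (τ : Set X → Strategy X Y) (Xs : ℕ → Set X) (k : ℕ) :
    play (cons Ys τ) Xs (k + 1) = play (τ (Xs 0)) (fun n => Xs (n + 1)) k := by
  simp only [play, prefixList_succ', cons]

end Strategy

section ReachabilityGame

variable {X Y Q : Type} {M : DFA (GameLetter X Y) Q} {F : Set Q}

lemma winsGameFrom_cons {q : Q} {Ys : Set Y} {τ : Set X → Strategy X Y}
    (hτ : ∀ X₀, WinsGameFrom M (M.step q (mkLetter X₀ Ys)) F (τ X₀)) :
    WinsGameFrom M q F (Strategy.cons Ys τ) := by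
  intro Xs
  obtain ⟨n, hn⟩ := hτ (Xs 0) fun k => Xs (k + 1)
  refine ⟨n + 1, ?_⟩
  rw [runFrom_succ, Strategy.play_cons_zero]
  simpa only [Strategy.play_cons_succ] using hn

lemma exists_winsGameFrom_of_mem_preC {S : Set Q}
    (hS : ∀ p ∈ S, ∃ σ : Strategy X Y, WinsGameFrom M p F σ) {q : Q} (hq : q ∈ PreC M S) :
    ∃ σ : Strategy X Y, WinsGameFrom M q F σ := by
  choose! τ hτ using hS
  obtain ⟨Ys, hYs⟩ := hq
  exact ⟨Strategy.cons Ys fun X₀ => τ (M.step q (mkLetter X₀ Ys)),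
    winsGameFrom_cons fun X₀ => hτ _ (hYs X₀)⟩

lemma exists_winsGameFrom_of_mem_winIter (i : ℕ) {q : Q} (hq : q ∈ WinIter M F i) :
    ∃ σ : Strategy X Y, WinsGameFrom M q F σ := by
  induction i generalizing q with
  | zero => exact ⟨fun _ => ∅, fun _ => ⟨0, hq⟩⟩
  | succ i ih =>
    rcases hq with hq | hq
    · exact ih hq
    · exact exists_winsGameFrom_of_mem_preC (fun _ => ih) hq

variable (M F)

lemma winIter_mono : Monotone (WinIter M F) :=
  monotone_nat_of_le_succ fun _ => Set.subset_union_left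

lemma subset_winRegion : F ⊆ WinRegion M F :=
  Set.subset_iUnion (WinIter M F) 0

lemma preC_winRegion_subset [Finite X] : PreC M (WinRegion M F) ⊆ WinRegion M F := by
  rintro q ⟨Ys, hYs⟩
  choose stage hstage using fun Xs => Set.mem_iUnion.1 (hYs Xs)
  obtain ⟨N, hN⟩ := (Set.finite_range stage).bddAbove
  have hq : q ∈ PreC M (WinIter M F N) :=
    ⟨Ys, fun Xs => winIter_mono M F (hN ⟨Xs, rfl⟩) (hstage Xs)⟩
  exact Set.mem_iUnion.2 ⟨N + 1, Or.inr hq⟩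

lemma exists_step_notMem_winRegion [Finite X] {q : Q} (hq : q ∉ WinRegion M F)
    (Ys : Set Y) : ∃ Xs : Set X, M.step q (mkLetter Xs Ys) ∉ WinRegion M F := by
  by_contra! h
  exact hq (preC_winRegion_subset M F ⟨Ys, h⟩)

variable {M F}

lemma exists_inputs_forall_runFrom_mem {W : Set Q}
    (hW : ∀ p ∈ W, ∀ Ys : Set Y, ∃ Xs : Set X, M.step p (mkLetter Xs Ys) ∈ W)
    (σ : Strategy X Y) {q : Q} (hq : q ∈ W) :
    ∃ Xs : ℕ → Set X, ∀ n, runFrom M q (play σ Xs) n ∈ W := by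
  choose! answer hanswer using hW
  -- the current state together with the inputs played so far
  let config : ℕ → Q × List (Set X) := fun n => Nat.rec (q, []) (fun _ c =>
    (M.step c.1 (mkLetter (answer c.1 (σ c.2)) (σ c.2)), c.2 ++ [answer c.1 (σ c.2)])) n
  let Xs : ℕ → Set X := fun n => answer (config n).1 (σ (config n).2)
  have hconfig : ∀ n, (config n).2 = prefixList Xs n ∧
      (config n).1 = runFrom M q (play σ Xs) n ∧ (config n).1 ∈ W := by
    intro n
    induction n with
    | zero => exact ⟨rfl, rfl, hq⟩
    | succ n ih =>
      obtain ⟨hhist, hstate, hmem⟩ := ih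
      refine ⟨by rw [prefixList_succ, ← hhist], ?_, hanswer _ hmem _⟩
      change M.step (config n).1 (mkLetter (Xs n) (σ (config n).2)) = _
      rw [hstate, hhist]
      rfl
  exact ⟨Xs, fun n => (hconfig n).2.1 ▸ (hconfig n).2.2⟩

end ReachabilityGame

theorem stmt7_general {X Y Q : Type} [Fintype X]
    (M : DFA (GameLetter X Y) Q) (F : Set Q) (q : Q) :
    q ∈ WinRegion M F ↔ ∃ σ : Strategy X Y, WinsGameFrom M q F σ := by
  constructor
  · intro hq
    obtain ⟨i, hi⟩ := Set.mem_iUnion.1 hq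
    exact exists_winsGameFrom_of_mem_winIter i hi
  · rintro ⟨σ, hσ⟩
    by_contra hq
    obtain ⟨Xs, hXs⟩ := exists_inputs_forall_runFrom_mem (W := (WinRegion M F)ᶜ)
      (fun _ hp Ys => exists_step_notMem_winRegion M F hp Ys) σ hq
    obtain ⟨n, hn⟩ := hσ Xs
    exact hXs n (subset_winRegion M F hn)

/-- a state belongs to the winning region iff the agent has a winning
    strategy in the game played from that state. -/
theorem stmt7 {X Y Q : Type} [Fintype X] [Fintype Y] [Fintype Q]
    (M : DFA (GameLetter X Y) Q) (F : Set Q) (q : Q) :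
    q ∈ WinRegion M F ↔ ∃ σ : Strategy X Y, WinsGameFrom M q F σ :=
  stmt7_general M F q
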